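/- arXiv:1109.4130 — 3 statements merged into one kernel-verified Lean document; each statement's English description precedes it below -/
import Mathlib

section
/- Let M be a matroid on the ground set [n] = {1,...,n} with no loops and no coloops, let B be a basis of M, and let v ∈ ℝ^n be a vector such that B is a basis of maximal v-weight (i.e., Σ_{i∈B} v_i is maximal among all bases of M). Then v lies in the tropical linear space Trop(M) if and only if for every element e ∈ [n] − B the minimum min{v_i : i ∈ C(e,B)} over the fundamental circuit C(e,B) is attained at least twice. -/
/-- `C` is a circuit of the matroid `M`: a minimal dependent subset of the ground set. -/
def IsCircuitOf {α : Type*} (M : Matroid α) (C : Set α) : Prop :=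
  C ⊆ M.E ∧ ¬ M.Indep C ∧ ∀ D, D ⊂ C → M.Indep D

/-- The fundamental circuit `C(e,B)` of `e` over `B`: the unique circuit of `M`
contained in `B ∪ {e}` (realized as the intersection of all such circuits). -/
def fundCircuitOf {α : Type*} (M : Matroid α) (e : α) (B : Set α) : Set α :=
  ⋂₀ {C | IsCircuitOf M C ∧ C ⊆ insert e B}

/-- The minimum of `v` over `C` is attained at least twice. -/
def MinAttainedTwice {n : ℕ} (v : Fin n → ℝ) (C : Set (Fin n)) : Prop :=
  ∃ j ∈ C, ∃ k ∈ C, j ≠ k ∧ v j = v k ∧ ∀ i ∈ C, v j ≤ v i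

/-- `v` lies in the tropical linear space `Trop(M)`: for every circuit `C` of `M`,
the minimum of `v` over `C` is attained at least twice. -/
def InTrop {n : ℕ} (M : Matroid (Fin n)) (v : Fin n → ℝ) : Prop :=
  ∀ C, IsCircuitOf M C → MinAttainedTwice v C

/-- The `v`-weight of a set `B`, i.e. `∑ i ∈ B, v i`. -/
noncomputable def weightOf {n : ℕ} (v : Fin n → ℝ) (B : Set (Fin n)) : ℝ :=
  ∑ i, B.indicator v i

/-!
Let `B` have maximal `v`-weight. If `i ∈ C(e,B)`, then `B + e - i` is again a basis, so
`v e ≤ v i`: on every fundamental circuit the minimum is attained at `e`.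
Conversely, suppose some circuit `C` has a unique minimizer `x`. If `C ⊆ B + x`, then `C = C(x,B)`.
Otherwise pick `e ∈ C \ B` with `e ≠ x`; since `v x < v e = min C(e,B)`, we have `x ∉ C(e,B)`,
and strong circuit elimination of `e` between `C` and `C(e,B)` gives a circuit through `x` that still
has `x` as its unique minimizer and has fewer elements outside `B`. Induction on `|C \ B|` finishes.
-/

open Set Matroid

lemma isCircuitOf_iff {α : Type*} {M : Matroid α} {C : Set α} :
    IsCircuitOf M C ↔ M.IsCircuit C := by
  rw [isCircuit_iff_forall_ssubset, Dep, IsCircuitOf]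
  tauto

lemma inTrop_iff {n : ℕ} {M : Matroid (Fin n)} {v : Fin n → ℝ} :
    InTrop M v ↔ ∀ C, M.IsCircuit C → MinAttainedTwice v C := by
  simp only [InTrop, isCircuitOf_iff]

lemma fundCircuitOf_eq_fundCircuit {α : Type*} {M : Matroid α} {B : Set α} {e : α}
    (hB : M.IsBase B) (heE : e ∈ M.E) (heB : e ∉ B) :
    fundCircuitOf M e B = M.fundCircuit e B := by
  have hset : {C | IsCircuitOf M C ∧ C ⊆ insert e B} = {M.fundCircuit e B} := by
    ext C
    simp only [mem_ofPred_eq, mem_singleton_iff, isCircuitOf_iff]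
    refine ⟨fun h ↦ h.1.eq_fundCircuit_of_subset hB.indep h.2, ?_⟩
    rintro rfl
    exact ⟨hB.fundCircuit_isCircuit heE heB, M.fundCircuit_subset_insert e B⟩
  rw [fundCircuitOf, hset, sInter_singleton]

def IsUniqueMinOn {α : Type*} (v : α → ℝ) (C : Set α) (x : α) : Prop :=
  x ∈ C ∧ ∀ i ∈ C, i ≠ x → v x < v i

lemma minAttainedTwice_iff_forall_not_isUniqueMinOn {n : ℕ} {v : Fin n → ℝ} {C : Set (Fin n)}
    (hC : C.Nonempty) : MinAttainedTwice v C ↔ ∀ x, ¬ IsUniqueMinOn v C x := by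
  constructor
  · rintro ⟨j, hj, k, hk, hjk, hvjk, hjmin⟩ x ⟨hx, hxlt⟩
    obtain rfl | hjx := eq_or_ne j x
    · exact (hxlt k hk hjk.symm).ne hvjk
    · exact (hxlt j hj hjx).not_ge (hjmin x hx)
  · intro h
    obtain ⟨x, hx, hxmin⟩ := exists_min_image C v (toFinite C) hC
    obtain ⟨i, hi, hix, hvix⟩ : ∃ i ∈ C, i ≠ x ∧ v i ≤ v x := by
      simpa [IsUniqueMinOn, hx] using h x
    exact ⟨x, hx, i, hi, hix.symm, (hxmin i hi).antisymm hvix, hxmin⟩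

section Weight

variable {n : ℕ} (v : Fin n → ℝ)

lemma weightOf_union_add_inter (S T : Set (Fin n)) :
    weightOf v (S ∪ T) + weightOf v (S ∩ T) = weightOf v S + weightOf v T := by
  simp only [weightOf, ← Finset.sum_add_distrib, indicator_union_add_inter_apply]

lemma weightOf_singleton (x : Fin n) : weightOf v {x} = v x := by
  simp [weightOf, indicator_apply]

lemma weightOf_exchange {B : Set (Fin n)} {e f : Fin n} (hf : f ∈ B) (he : e ∉ B) :
    weightOf v (insert e B \ {f}) + v f = weightOf v B + v e := by
  have hremove := weightOf_union_add_inter v (insert e B \ {f}) {f}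
  have hadd := weightOf_union_add_inter v {e} B
  rw [sdiff_union_self, union_singleton, insert_eq_of_mem (mem_insert_of_mem e hf),
    sdiff_inter_self, weightOf_singleton] at hremove
  rw [singleton_union, singleton_inter_eq_empty.2 he, weightOf_singleton] at hadd
  linarith

end Weight

lemma le_of_mem_fundCircuit_of_isBase_weight_max {n : ℕ} {M : Matroid (Fin n)}
    {B : Set (Fin n)} {v : Fin n → ℝ} (hB : M.IsBase B)
    (hmax : ∀ B', M.IsBase B' → weightOf v B' ≤ weightOf v B)
    {e i : Fin n} (heE : e ∈ M.E) (heB : e ∉ B) (hi : i ∈ M.fundCircuit e B) : v e ≤ v i := by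
  obtain rfl | hie := eq_or_ne i e
  · exact le_rfl
  have hiB : i ∈ B := (M.fundCircuit_subset_insert e B hi).resolve_left hie
  have hindep : M.Indep (insert e B \ {i}) :=
    (hB.indep.mem_fundCircuit_iff (by rwa [hB.closure_eq]) heB).1 hi
  have hle := hmax _ (hB.exchange_isBase_of_indep' hiB heB hindep)
  linarith [weightOf_exchange v hiB heB]

lemma ncard_sdiff_lt_of_subset_union_fundCircuit {α : Type*} [Finite α] {M : Matroid α}
    {B C C' : Set α} {e : α} (heC : e ∈ C) (heB : e ∉ B)
    (hC' : C' ⊆ (C ∪ M.fundCircuit e B) \ {e}) : (C' \ B).ncard < (C \ B).ncard := by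
  refine (ncard_le_ncard (t := (C \ B) \ {e}) ?_).trans_lt
    (ncard_sdiff_singleton_lt_of_mem ⟨heC, heB⟩)
  rintro i ⟨hiC', hiB⟩
  obtain ⟨hiC | hiD, hie⟩ := hC' hiC'
  · exact ⟨⟨hiC, hiB⟩, hie⟩
  · exact absurd ((M.fundCircuit_subset_insert e B hiD).resolve_left hie) hiB

theorem Matroid.IsCircuit.not_isUniqueMinOn {α : Type*} [Finite α] {M : Matroid α} {B C : Set α}
    {v : α → ℝ} {x : α} (hB : M.IsBase B)
    (hmin : ∀ e ∈ M.E \ B, ∀ i ∈ M.fundCircuit e B, v e ≤ v i)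
    (hfund : ∀ e ∈ M.E \ B, ∀ y, ¬ IsUniqueMinOn v (M.fundCircuit e B) y)
    (hC : M.IsCircuit C) : ¬ IsUniqueMinOn v C x := by
  induction hk : (C \ B).ncard using Nat.strong_induction_on generalizing C with
  | _ k ih =>
  rintro ⟨hxC, hxlt⟩
  by_cases hCB : C \ B ⊆ {x}
  · have hCs : C ⊆ insert x B := by rwa [sdiff_subset_iff, union_singleton] at hCB
    have hxB : x ∉ B := fun hxB ↦
      hC.not_indep (hB.indep.subset (by rwa [insert_eq_of_mem hxB] at hCs))
    have hxE : x ∈ M.E := hC.subset_ground hxC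
    rw [hC.eq_fundCircuit_of_subset hB.indep hCs] at hxC hxlt
    exact hfund x ⟨hxE, hxB⟩ x ⟨hxC, hxlt⟩
  obtain ⟨e, ⟨heC, heB⟩, hex⟩ := not_subset.1 hCB
  have heE : e ∈ M.E := hC.subset_ground heC
  have hxD : x ∉ M.fundCircuit e B := fun hxD ↦
    (hxlt e heC hex).not_ge (hmin e ⟨heE, heB⟩ x hxD)
  obtain ⟨C', hC's, hC', hxC'⟩ := hC.strong_elimination (hB.fundCircuit_isCircuit heE heB)
    heC (M.mem_fundCircuit e B) hxC hxD
  refine ih _ (hk ▸ ncard_sdiff_lt_of_subset_union_fundCircuit heC heB hC's) hC' rfl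
    ⟨hxC', fun i hi hix ↦ ?_⟩
  obtain ⟨hiC | hiD, -⟩ := hC's hi
  · exact hxlt i hiC hix
  · exact (hxlt e heC hex).trans_le (hmin e ⟨heE, heB⟩ i hiD)

theorem statement0_general {n : ℕ} (M : Matroid (Fin n)) (hE : M.E = Set.univ)
    (B : Set (Fin n)) (hB : M.IsBase B)
    (v : Fin n → ℝ)
    (hmax : ∀ B', M.IsBase B' → weightOf v B' ≤ weightOf v B) :
    InTrop M v ↔ ∀ e ∉ B, MinAttainedTwice v (fundCircuitOf M e B) := by
  have hground (e : Fin n) : e ∈ M.E := hE ▸ mem_univ e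
  have hfund (e : Fin n) (heB : e ∉ B) : fundCircuitOf M e B = M.fundCircuit e B :=
    fundCircuitOf_eq_fundCircuit hB (hground e) heB
  rw [inTrop_iff]
  constructor
  · intro h e heB
    rw [hfund e heB]
    exact h _ (hB.fundCircuit_isCircuit (hground e) heB)
  · intro h C hC
    rw [minAttainedTwice_iff_forall_not_isUniqueMinOn hC.nonempty]
    refine fun x ↦ hC.not_isUniqueMinOn hB
      (fun e he i hi ↦ le_of_mem_fundCircuit_of_isBase_weight_max hB hmax he.1 he.2 hi)
      (fun e he ↦ ?_)
    rw [← minAttainedTwice_iff_forall_not_isUniqueMinOn ⟨e, M.mem_fundCircuit e B⟩,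
      ← hfund e he.2]
    exact h e he.2

/-- For a matroid `M` on `[n]` with no loops and no coloops, a basis `B` of
`M`, and a vector `v` for which `B` has maximal `v`-weight, `v` lies in `Trop(M)` if and
only if for every `e ∉ B` the minimum of `v` over the fundamental circuit `C(e,B)` is
attained at least twice. -/
theorem statement0 {n : ℕ} (M : Matroid (Fin n)) (hE : M.E = Set.univ)
    (hloops : ∀ e, M.Indep {e})
    (hcoloops : ∀ e, ∃ B, M.IsBase B ∧ e ∉ B)
    (B : Set (Fin n)) (hB : M.IsBase B)
    (v : Fin n → ℝ)
    (hmax : ∀ B', M.IsBase B' → weightOf v B' ≤ weightOf v B) :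
    InTrop M v ↔ ∀ e ∉ B, MinAttainedTwice v (fundCircuitOf M e B) :=
  statement0_general M hE B hB v hmax
end

section
/- Let M be a matroid on the ground set [n] = {1,...,n} with no loops and no coloops, and let B be a basis of M. For any function x : B → ℝ, define the vector f_B(x) ∈ ℝ^n by f_B(x)_i = x_i if i ∈ B, and f_B(x)_i = min{x_j : j ∈ C(i,B) − {i}} if i ∉ B. Then B is a basis of maximal f_B(x)-weight and f_B(x) lies in the tropical linear space Trop(M); that is, f_B(x) lies in the local tropical linear space Trop(M)_B. -/
/-!
Write `v = f_B(x)`. For `i ∉ B` the value `v i` is the minimum of `v` over `C(i,B) - {i}`.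

Maximality of `B`: for a base `B' ≠ B` and `i ∈ B' \ B` some `j ∈ C(i,B) \ B'` can replace `i`
in `B'`; this moves `B'` towards `B` and does not decrease the weight, since `v i ≤ v j`.

Tropical condition: let `a` minimise `v` on a circuit `C`; induct on `|C \ B|`. If `C \ B ⊆ {a}`
then `C = C(a,B)`, and `v a` is attained on `C(a,B) - {a}` by construction. Otherwise take
`i ∈ C \ B` other than `a`, with `v a < v i` (else `i` is the second minimiser). Then `a ∉ C(i,B)`,
and strong circuit elimination of `i` from `C` and `C(i,B)` gives a circuit `C' ∋ a` with fewer
elements outside `B`, on which `a` is still a minimiser because `v ≥ v i > v a` on `C(i,B) - {i}`.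
For the same reason the second minimiser of `C'` found by induction lies in `C`.
-/

open Set

namespace Matroid

variable {α : Type*} {M : Matroid α} {B B' C I : Set α} {e : α}

lemma isCircuitOf_iff : IsCircuitOf M C ↔ M.IsCircuit C := by
  rw [isCircuit_iff_forall_ssubset, Dep, IsCircuitOf]
  tauto

lemma Indep.fundCircuitOf_eq (hI : M.Indep I) (he : e ∈ M.closure I) (heI : e ∉ I) :
    fundCircuitOf M e I = M.fundCircuit e I := by
  have hcircuits : {C | IsCircuitOf M C ∧ C ⊆ insert e I} = {M.fundCircuit e I} := by
    ext C
    simp only [mem_singleton_iff, isCircuitOf_iff]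
    refine ⟨fun hC ↦ hC.1.eq_fundCircuit_of_subset hI hC.2, ?_⟩
    rintro rfl
    exact ⟨hI.fundCircuit_isCircuit he heI, M.fundCircuit_subset_insert e I⟩
  rw [fundCircuitOf, hcircuits, sInter_singleton]

lemma mem_of_mem_fundCircuit_of_ne {i j : α} (hj : j ∈ M.fundCircuit i I) (hji : j ≠ i) : j ∈ I :=
  (M.fundCircuit_subset_insert i I hj).resolve_left hji

lemma IsBase.exists_mem_fundCircuit_insert_sdiff_isBase (hB : M.IsBase B) (hB' : M.IsBase B')
    {i : α} (hi : i ∈ B' \ B) :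
    ∃ j ∈ M.fundCircuit i B \ B', M.IsBase (insert j (B' \ {i})) := by
  have hiC : M.IsCircuit (M.fundCircuit i B) :=
    hB.fundCircuit_isCircuit (hB'.subset_ground hi.1) hi.2
  obtain ⟨j, hjC, hjcl⟩ : ∃ j ∈ M.fundCircuit i B \ {i}, j ∉ M.closure (B' \ {i}) := by
    by_contra! h
    exact hB'.indep.notMem_closure_sdiff_of_mem hi.1 <|
      closure_subset_closure_of_subset_closure h
        (hiC.mem_closure_sdiff_singleton_of_mem (M.mem_fundCircuit i B))
  have hjE : j ∈ M.E := hiC.subset_ground hjC.1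
  refine ⟨j, ⟨hjC.1, fun hjB' ↦ hjcl (M.mem_closure_of_mem' ⟨hjB', hjC.2⟩ hjE)⟩,
    hB'.exchange_base_of_notMem_closure hi.1 hjcl hjE⟩

def IsFundCircuitMin (M : Matroid α) (B : Set α) (v : α → ℝ) : Prop :=
  ∀ i ∈ M.E \ B, IsLeast (v '' (M.fundCircuit i B \ {i})) (v i)

namespace IsFundCircuitMin

variable {v : α → ℝ} {i j : α}

lemma le_of_mem_fundCircuit (hv : IsFundCircuitMin M B v) (hi : i ∈ M.E \ B)
    (hj : j ∈ M.fundCircuit i B) (hji : j ≠ i) : v i ≤ v j :=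
  (hv i hi).2 ⟨j, ⟨hj, hji⟩, rfl⟩

lemma exists_ne_eq_of_isCircuit [Finite α] (hB : M.IsBase B) (hv : IsFundCircuitMin M B v)
    (hC : M.IsCircuit C) {a : α} (ha : a ∈ C) (hmin : ∀ b ∈ C, v a ≤ v b) :
    ∃ j ∈ C, j ≠ a ∧ v j = v a := by
  induction hk : (C \ B).ncard using Nat.strong_induction_on generalizing C with
  | _ k IH =>
  by_cases hCa : C \ B ⊆ {a}
  · have haB : a ∉ B := fun haB ↦ hC.not_indep <| hB.indep.subset fun b hb ↦ by
      by_contra hbB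
      exact hbB ((hCa ⟨hb, hbB⟩ : b = a) ▸ haB)
    have hCeq : C = M.fundCircuit a B := hC.eq_fundCircuit_of_subset hB.indep fun b hb ↦ by
      by_cases hbB : b ∈ B
      · exact .inr hbB
      · exact .inl (hCa ⟨hb, hbB⟩)
    obtain ⟨j, ⟨hjC, hja⟩, hj⟩ := (hv a ⟨hC.subset_ground ha, haB⟩).1
    exact ⟨j, hCeq ▸ hjC, hja, hj⟩
  obtain ⟨i, ⟨hiC, hiB⟩, hia : i ≠ a⟩ := not_subset.1 hCa
  obtain hvi | hvi := (hmin i hiC).eq_or_lt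
  · exact ⟨i, hiC, hia, hvi.symm⟩
  have hiE : i ∈ M.E \ B := ⟨hC.subset_ground hiC, hiB⟩
  have hD := hB.fundCircuit_isCircuit hiE.1 hiB
  have haD : a ∉ M.fundCircuit i B := fun haD ↦
    (hv.le_of_mem_fundCircuit hiE haD hia.symm).not_gt hvi
  obtain ⟨C₃, hC₃sub, hC₃, haC₃⟩ :=
    hC.strong_elimination hD hiC (M.mem_fundCircuit i B) ha haD
  have hmin₃ : ∀ b ∈ C₃, v a ≤ v b := fun b hb ↦ by
    obtain ⟨hbC | hbD, hbi⟩ := hC₃sub hb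
    · exact hmin b hbC
    · exact hvi.le.trans (hv.le_of_mem_fundCircuit hiE hbD hbi)
  have hlt : (C₃ \ B).ncard < k := by
    refine hk ▸ ncard_lt_ncard (ssubset_of_subset_not_subset (fun b ⟨hb, hbB⟩ ↦ ?_) ?_)
    · obtain ⟨hbC | hbD, hbi⟩ := hC₃sub hb
      · exact ⟨hbC, hbB⟩
      · exact (hbB (mem_of_mem_fundCircuit_of_ne hbD hbi)).elim
    · exact fun h ↦ (hC₃sub (h ⟨hiC, hiB⟩).1).2 rfl
  obtain ⟨j, hjC₃, hja, hj⟩ := IH _ hlt hC₃ haC₃ hmin₃ rfl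
  obtain ⟨hjC | hjD, hji⟩ := hC₃sub hjC₃
  · exact ⟨j, hjC, hja, hj⟩
  · exact ((hv.le_of_mem_fundCircuit hiE hjD hji).not_gt (hj ▸ hvi)).elim

end IsFundCircuitMin

lemma isFundCircuitMin_of_eq_sInf [Finite α] [M.Loopless] (hB : M.IsBase B) {x v : α → ℝ}
    (hvB : ∀ i ∈ B, v i = x i)
    (hvnB : ∀ i ∈ M.E \ B, v i = sInf (x '' (fundCircuitOf M i B \ {i}))) :
    IsFundCircuitMin M B v := by
  intro i hi
  have hC := hB.fundCircuit_isCircuit hi.1 hi.2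
  have hxv : x '' (M.fundCircuit i B \ {i}) = v '' (M.fundCircuit i B \ {i}) :=
    image_congr fun j hj ↦ (hvB j (mem_of_mem_fundCircuit_of_ne hj.1 hj.2)).symm
  obtain ⟨j, hjC, hji⟩ := (loopless_iff_forall_isCircuit.1 ‹_› _ hC).exists_ne i
  rw [hvnB i hi, hB.indep.fundCircuitOf_eq (hB.closure_eq ▸ hi.1) hi.2, hxv]
  have hne : (v '' (M.fundCircuit i B \ {i})).Nonempty := ⟨v j, j, ⟨hjC, hji⟩, rfl⟩
  exact ⟨hne.csInf_mem (toFinite _), fun _ hb ↦ csInf_le (toFinite _).bddBelow hb⟩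

end Matroid

lemma weightOf_insert {n : ℕ} (v : Fin n → ℝ) {S : Set (Fin n)} {j : Fin n} (hj : j ∉ S) :
    weightOf v (insert j S) = weightOf v S + v j := by
  classical
  rw [weightOf, weightOf, insert_eq, indicator_union_of_disjoint (disjoint_singleton_left.2 hj),
    Finset.sum_add_distrib, add_comm]
  simp [indicator_apply]

namespace Matroid.IsFundCircuitMin

variable {n : ℕ} {M : Matroid (Fin n)} {B : Set (Fin n)} {v : Fin n → ℝ}

lemma inTrop (hB : M.IsBase B) (hv : IsFundCircuitMin M B v) : InTrop M v := by
  intro C hC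
  rw [isCircuitOf_iff] at hC
  obtain ⟨a, ha, hmin⟩ := exists_min_image C v C.toFinite hC.nonempty
  obtain ⟨j, hjC, hja, hj⟩ := hv.exists_ne_eq_of_isCircuit hB hC ha hmin
  exact ⟨a, ha, j, hjC, hja.symm, hj.symm, hmin⟩

lemma weightOf_le (hB : M.IsBase B) (hv : IsFundCircuitMin M B v) {B' : Set (Fin n)}
    (hB' : M.IsBase B') : weightOf v B' ≤ weightOf v B := by
  induction hk : (B' \ B).ncard using Nat.strong_induction_on generalizing B' with
  | _ k IH =>
  obtain hB'B | ⟨i, hi⟩ := (B' \ B).eq_empty_or_nonempty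
  · rw [hB'.eq_of_subset_isBase hB (sdiff_eq_empty.1 hB'B)]
  obtain ⟨j, ⟨hjC, hjB'⟩, hB''⟩ := hB.exists_mem_fundCircuit_insert_sdiff_isBase hB' hi
  have hji : j ≠ i := fun h ↦ hjB' (h ▸ hi.1)
  have hjB : j ∈ B := mem_of_mem_fundCircuit_of_ne hjC hji
  have hlt : (insert j (B' \ {i}) \ B).ncard < k := by
    refine hk ▸ ncard_lt_ncard (ssubset_of_subset_not_subset ?_ ?_)
    · rintro b ⟨rfl | ⟨hb, -⟩, hbB⟩
      · exact (hbB hjB).elim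
      · exact ⟨hb, hbB⟩
    · exact fun h ↦ (h hi).1.elim (fun hij ↦ hji hij.symm) fun hi' ↦ hi'.2 rfl
  calc weightOf v B' = weightOf v (B' \ {i}) + v i := by
        rw [← weightOf_insert v (fun h ↦ h.2 rfl), insert_sdiff_singleton, insert_eq_of_mem hi.1]
    _ ≤ weightOf v (B' \ {i}) + v j := by
        gcongr
        exact hv.le_of_mem_fundCircuit ⟨hB'.subset_ground hi.1, hi.2⟩ hjC hji
    _ = weightOf v (insert j (B' \ {i})) := (weightOf_insert v fun h ↦ hjB' h.1).symm
    _ ≤ weightOf v B := IH _ hlt hB'' rfl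

end Matroid.IsFundCircuitMin

theorem statement1_general {n : ℕ} (M : Matroid (Fin n))
    (hloops : ∀ e, M.Indep {e})
    (B : Set (Fin n)) (hB : M.IsBase B)
    (x : Fin n → ℝ) (v : Fin n → ℝ)
    (hvB : ∀ i ∈ B, v i = x i)
    (hvnB : ∀ i ∉ B, v i = sInf (x '' (fundCircuitOf M i B \ {i}))) :
    (∀ B', M.IsBase B' → weightOf v B' ≤ weightOf v B) ∧ InTrop M v := by
  have : M.Loopless :=
    M.loopless_iff_forall_isNonloop.2 fun e _ ↦ Matroid.indep_singleton.1 (hloops e)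
  have hv := M.isFundCircuitMin_of_eq_sInf hB hvB fun i hi ↦ hvnB i hi.2
  exact ⟨fun _ hB' ↦ hv.weightOf_le hB hB', hv.inTrop hB⟩

/-- For a matroid `M` on `[n]` with no loops and no coloops, a basis `B`, and
any assignment `x` of real values to the elements of `B`, the vector `v = f_B(x)` defined
by `v i = x i` for `i ∈ B` and `v i = min { x j : j ∈ C(i,B) - {i} }` for `i ∉ B` lies in
the local tropical linear space `Trop(M)_B`: the basis `B` has maximal `v`-weight and
`v ∈ Trop(M)`. -/
theorem statement1 {n : ℕ} (M : Matroid (Fin n)) (hE : M.E = Set.univ)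
    (hloops : ∀ e, M.Indep {e})
    (hcoloops : ∀ e, ∃ B, M.IsBase B ∧ e ∉ B)
    (B : Set (Fin n)) (hB : M.IsBase B)
    (x : Fin n → ℝ) (v : Fin n → ℝ)
    (hvB : ∀ i ∈ B, v i = x i)
    (hvnB : ∀ i ∉ B, v i = sInf (x '' (fundCircuitOf M i B \ {i}))) :
    (∀ B', M.IsBase B' → weightOf v B' ≤ weightOf v B) ∧ InTrop M v :=
  statement1_general M hloops B hB x v hvB hvnB
end

section
/- Let M be a matroid on the ground set [n] = {1,...,n} with no loops and no coloops, and let v ∈ Trop(M). Then there exists a basis B of M of maximal v-weight such that for every k ∈ [n] − B and every l ∈ C(k,B) with l ≠ k and v_l = v_k, one has l < k. (Such a basis is obtained by taking the lexicographically first basis of maximal v-weight; this yields the regressive property underlying the cyclic Bergman fan.) -/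
open Set

namespace Matroid

variable {α : Type*} {M : Matroid α} {B : Set α} {e f : α}

lemma isCircuitOf_iff_isCircuit {C : Set α} : IsCircuitOf M C ↔ M.IsCircuit C := by
  rw [isCircuit_iff_forall_ssubset, IsCircuitOf, Dep]
  tauto

lemma IsBase.fundCircuitOf_eq_fundCircuit (hB : M.IsBase B) (he : e ∈ M.E) (heB : e ∉ B) :
    fundCircuitOf M e B = M.fundCircuit e B := by
  have hcircuits : {C | IsCircuitOf M C ∧ C ⊆ insert e B} = {M.fundCircuit e B} := by
    ext C
    simp only [isCircuitOf_iff_isCircuit, mem_ofPred_eq, mem_singleton_iff]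
    constructor
    · rintro ⟨hC, hCeB⟩
      exact hC.eq_fundCircuit_of_subset hB.indep hCeB
    · rintro rfl
      exact ⟨hB.fundCircuit_isCircuit he heB, M.fundCircuit_subset_insert e B⟩
  rw [fundCircuitOf, hcircuits, sInter_singleton]

lemma IsBase.insert_sdiff_isBase_of_mem_fundCircuit (hB : M.IsBase B) (he : e ∈ M.E)
    (heB : e ∉ B) (hf : f ∈ M.fundCircuit e B) : M.IsBase (insert e B \ {f}) := by
  obtain rfl | hfe := eq_or_ne f e
  · rwa [insert_sdiff_self_of_notMem heB]
  have hfB : f ∈ B := (M.fundCircuit_subset_insert e B hf).resolve_left hfe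
  have hecl : e ∈ M.closure B := by rwa [hB.closure_eq]
  exact hB.exchange_isBase_of_indep' hfB heB ((hB.indep.mem_fundCircuit_iff hecl heB).1 hf)

end Matroid

lemma weightOf_coe_finset {n : ℕ} (w : Fin n → ℝ) (s : Finset (Fin n)) :
    weightOf w s = ∑ i ∈ s, w i := by
  classical
  simp [weightOf, Set.indicator_apply]

lemma weightOf_insert_sdiff_add {n : ℕ} (w : Fin n → ℝ) {B : Set (Fin n)} {k l : Fin n}
    (hk : k ∉ B) (hl : l ∈ B) : weightOf w (insert k B \ {l}) + w l = weightOf w B + w k := by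
  classical
  lift B to Finset (Fin n) using B.toFinite
  rw [← Finset.coe_insert, ← Finset.coe_erase, weightOf_coe_finset, weightOf_coe_finset,
    Finset.sum_erase_add _ _ (Finset.mem_insert_of_mem hl), Finset.sum_insert hk, add_comm]

theorem statement9_general {n : ℕ} (M : Matroid (Fin n)) (hE : M.E = Set.univ)
    (v : Fin n → ℝ) :
    ∃ B : Set (Fin n), M.IsBase B ∧ (∀ B', M.IsBase B' → weightOf v B' ≤ weightOf v B) ∧
      ∀ k ∉ B, ∀ l ∈ fundCircuitOf M k B, l ≠ k → v l = v k → l < k := by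
  obtain ⟨B₀, hB₀, hB₀max⟩ :=
    exists_max_image {B | M.IsBase B} (weightOf v) (toFinite _) M.exists_isBase
  obtain ⟨B, ⟨hB, hBmax⟩, hBmin⟩ :=
    exists_min_image {B | M.IsBase B ∧ ∀ B', M.IsBase B' → weightOf v B' ≤ weightOf v B}
      (weightOf fun i => (i : ℝ)) (toFinite _) ⟨B₀, hB₀, hB₀max⟩
  refine ⟨B, hB, hBmax, fun k hk l hl hlk hvl => ?_⟩
  have hkE : k ∈ M.E := hE ▸ mem_univ k
  rw [hB.fundCircuitOf_eq_fundCircuit hkE hk] at hl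
  have hlB : l ∈ B := (M.fundCircuit_subset_insert k B hl).resolve_left hlk
  have hB' := hB.insert_sdiff_isBase_of_mem_fundCircuit hkE hk hl
  have hweight : weightOf v (insert k B \ {l}) = weightOf v B := by
    linarith [weightOf_insert_sdiff_add v hk hlB]
  have hindex := hBmin _ ⟨hB', fun B' hB'base => hweight ▸ hBmax B' hB'base⟩
  by_contra hkl
  have hkl' : (k : ℝ) < l := by exact_mod_cast lt_of_le_of_ne (not_lt.1 hkl) (Ne.symm hlk)
  linarith [weightOf_insert_sdiff_add (fun i => (i : ℝ)) hk hlB]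

/-- For a matroid `M` on `[n]` with no loops and no coloops and any
`v ∈ Trop(M)`, there is a basis `B` of maximal `v`-weight such that for every
`k ∈ [n] - B`, every `l ∈ C(k,B)` with `l ≠ k` and `v l = v k` satisfies `l < k`
(the regressive property underlying the cyclic Bergman fan). -/
theorem statement9 {n : ℕ} (M : Matroid (Fin n)) (hE : M.E = Set.univ)
    (hloops : ∀ e, M.Indep {e})
    (hcoloops : ∀ e, ∃ B, M.IsBase B ∧ e ∉ B)
    (v : Fin n → ℝ) (hv : InTrop M v) :
    ∃ B : Set (Fin n), M.IsBase B ∧ (∀ B', M.IsBase B' → weightOf v B' ≤ weightOf v B) ∧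
      ∀ k ∉ B, ∀ l ∈ fundCircuitOf M k B, l ≠ k → v l = v k → l < k :=
  statement9_general M hE v
end
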